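/- Let 𝒜₁, 𝒜₂ and 𝖡 be abelian categories and 𝖱 : 𝒜₁ × 𝒜₂ → 𝖡 a functor additive in each variable such that 𝖱(−, N) is right exact for every object N of 𝒜₂. Assume 𝒜₂ admits a generating class 𝖴 (every object of 𝒜₂ is an epimorphic image of some member of 𝖴) such that 𝖱(−, U) is exact for every U ∈ 𝖴. Let 0 → X → Y → Z → 0 be a short exact sequence in 𝒜₁ such that 𝖱(X, −) and 𝖱(Y, −) are right exact and 𝖱(Z, −) is exact. Then for every object N of 𝒜₂ the sequence 0 → 𝖱(X, N) → 𝖱(Y, N) → 𝖱(Z, N) → 0 is exact in 𝖡. -/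

import Mathlib

open CategoryTheory CategoryTheory.Limits

universe v₁ v₂ v₃ u₁ u₂ u₃

/-!
Write `N` as a quotient `p : U ⟶ N` of some `U ∈ 𝒰` and let `K = ker p`. Applying `R` to
`0 → X → Y → Z → 0` and `0 → K → U → N → 0` gives a 3×3 grid whose rows are `R(-, K)`,
`R(-, U)`, `R(-, N)` and whose columns are `R(X, -)`, `R(Y, -)`, `R(Z, -)`. Right exactness
of `R(-, N)` leaves only injectivity of `R(X, N) → R(Y, N)`, and a diagram chase gets it from
the exactness of the `K`-row, the injectivity in the `U`-row, the surjectivity of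
`R(X, U) → R(X, N)`, the exactness of the `Y`-column and the injectivity of
`R(Z, K) → R(Z, U)`.
-/

namespace CategoryTheory.ShortComplex

section Abelian

variable {C : Type*} [Category C] [Abelian C]

lemma kernelSequence_shortExact {U N : C} (p : U ⟶ N) [Epi p] :
    (kernelSequence p).ShortExact :=
  .mk' (kernelSequence_exact p) inferInstance ‹_›

lemma mono_X₃_f_of_exact_of_mono (D : ShortComplex (ShortComplex C)) (h₁ : D.X₁.Exact)
    [Mono D.X₂.f] [Epi D.g.τ₁] (h₂ : (D.map π₂).Exact) [Mono D.f.τ₃] : Mono D.X₃.f := by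
  refine Preadditive.mono_of_cancel_zero _ fun x hx => ?_
  obtain ⟨A₁, e₁, _, x₁, hx₁⟩ := surjective_up_to_refinements_of_epi D.g.τ₁ x
  have hx₁' : (x₁ ≫ D.X₂.f) ≫ D.g.τ₂ = 0 := by
    rw [Category.assoc, ← D.g.comm₁₂, ← reassoc_of% hx₁, hx, comp_zero]
  obtain ⟨A₂, e₂, _, (y : A₂ ⟶ D.X₁.X₂), hy⟩ := h₂.exact_up_to_refinements _ hx₁'
  change e₂ ≫ x₁ ≫ D.X₂.f = y ≫ D.f.τ₂ at hy
  have hy₀ : y ≫ D.X₁.g = 0 := by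
    rw [← cancel_mono D.f.τ₃, Category.assoc, ← D.f.comm₂₃, ← reassoc_of% hy, D.X₂.zero,
      comp_zero, comp_zero, zero_comp]
  obtain ⟨A₃, e₃, _, z, hz⟩ := h₁.exact_up_to_refinements y hy₀
  have hz₁ : e₃ ≫ e₂ ≫ x₁ = z ≫ D.f.τ₁ := by
    rw [← cancel_mono D.X₂.f, Category.assoc, Category.assoc, hy, reassoc_of% hz,
      Category.assoc, D.f.comm₁₂]
  have hzero : (e₃ ≫ e₂ ≫ e₁) ≫ x = 0 := by
    rw [Category.assoc, Category.assoc, hx₁, reassoc_of% hz₁, ← comp_τ₁, D.zero, zero_τ₁,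
      comp_zero]
  rwa [← cancel_epi (e₃ ≫ e₂ ≫ e₁), comp_zero]

end Abelian

variable {𝒜₁ 𝒜₂ ℬ : Type*} [Category 𝒜₁] [Category 𝒜₂] [Category ℬ]
  [HasZeroMorphisms 𝒜₁] [HasZeroMorphisms 𝒜₂] [HasZeroMorphisms ℬ]

def mapBifunctorGrid (F : 𝒜₁ ⥤ 𝒜₂ ⥤ ℬ) [∀ X : 𝒜₁, (F.obj X).PreservesZeroMorphisms]
    [∀ N : 𝒜₂, (F.flip.obj N).PreservesZeroMorphisms] (S : ShortComplex 𝒜₁)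
    (T : ShortComplex 𝒜₂) : ShortComplex (ShortComplex ℬ) where
  X₁ := S.map (F.flip.obj T.X₁)
  X₂ := S.map (F.flip.obj T.X₂)
  X₃ := S.map (F.flip.obj T.X₃)
  f := S.mapNatTrans (F.flip.map T.f)
  g := S.mapNatTrans (F.flip.map T.g)
  zero := by ext <;> exact (T.map _).zero

end CategoryTheory.ShortComplex

/-- **Statement 9.** Let `𝒜₁, 𝒜₂, ℬ` be abelian categories and `R : 𝒜₁ × 𝒜₂ → ℬ` a
functor additive in each variable such that `R(-, N)` is right exact for all `N`.
Assume `𝒜₂` has a generating class `𝒰` with `R(-, U)` exact for `U ∈ 𝒰`.  If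
`0 → X → Y → Z → 0` is exact in `𝒜₁` with `R(X, -)`, `R(Y, -)` right exact and
`R(Z, -)` exact, then `0 → R(X,N) → R(Y,N) → R(Z,N) → 0` is exact for every `N`. -/
theorem statement9 {𝒜₁ : Type u₁} {𝒜₂ : Type u₂} {ℬ : Type u₃}
    [Category.{v₁} 𝒜₁] [Category.{v₂} 𝒜₂] [Category.{v₃} ℬ]
    [Abelian 𝒜₁] [Abelian 𝒜₂] [Abelian ℬ]
    (F : 𝒜₁ ⥤ 𝒜₂ ⥤ ℬ)
    [∀ X : 𝒜₁, (F.obj X).Additive] [∀ N : 𝒜₂, (F.flip.obj N).Additive]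
    (hRE : ∀ (N : 𝒜₂) (S' : ShortComplex 𝒜₁), S'.ShortExact →
      (S'.map (F.flip.obj N)).Exact ∧ Epi ((F.flip.obj N).map S'.g))
    (𝒰 : Set 𝒜₂)
    (hgen : ∀ N : 𝒜₂, ∃ U ∈ 𝒰, ∃ p : U ⟶ N, Epi p)
    (hUexact : ∀ U ∈ 𝒰, ∀ S' : ShortComplex 𝒜₁, S'.ShortExact →
      (S'.map (F.flip.obj U)).ShortExact)
    (S : ShortComplex 𝒜₁) (hS : S.ShortExact)
    (hX : ∀ T : ShortComplex 𝒜₂, T.ShortExact →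
      (T.map (F.obj S.X₁)).Exact ∧ Epi ((F.obj S.X₁).map T.g))
    (hY : ∀ T : ShortComplex 𝒜₂, T.ShortExact →
      (T.map (F.obj S.X₂)).Exact ∧ Epi ((F.obj S.X₂).map T.g))
    (hZ : ∀ T : ShortComplex 𝒜₂, T.ShortExact → (T.map (F.obj S.X₃)).ShortExact) :
    ∀ N : 𝒜₂, (S.map (F.flip.obj N)).ShortExact := by
  intro N
  obtain ⟨U, hU, p, _⟩ := hgen N
  have hT := ShortComplex.kernelSequence_shortExact p
  let D := ShortComplex.mapBifunctorGrid F S (ShortComplex.kernelSequence p)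
  have : Mono D.X₂.f := (hUexact U hU S hS).mono_f
  have : Epi D.g.τ₁ := (hX _ hT).2
  have : Mono D.f.τ₃ := (hZ _ hT).mono_f
  have : Mono D.X₃.f :=
    ShortComplex.mono_X₃_f_of_exact_of_mono D (hRE _ S hS).1 (hY _ hT).1
  obtain ⟨hexact, hepi⟩ := hRE N S hS
  exact .mk' hexact this hepi
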